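/- For a tree T_m of order m ≥ 2 and any connected graph H_n of order n ≥ 2, rvc(T_m ⋄ H_n) = rvc(T_m). -/

import Mathlib

open SimpleGraph

/-- A walk is a rainbow vertex path: it is a path and its internal vertices
receive pairwise distinct colors. -/
def IsRainbowPath {V : Type*} (G : SimpleGraph V) {k : ℕ} (c : V → Fin k)
    {u v : V} (p : G.Walk u v) : Prop :=
  p.IsPath ∧ (p.support.tail.dropLast.map c).Nodup

/-- A rainbow vertex coloring: every two vertices are joined by a rainbow vertex path. -/
def IsRVColoring {V : Type*} (G : SimpleGraph V) {k : ℕ} (c : V → Fin k) : Prop :=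
  ∀ u v : V, ∃ p : G.Walk u v, IsRainbowPath G c p

/-- The rainbow vertex connection number. -/
noncomputable def rvc {V : Type*} (G : SimpleGraph V) : ℕ :=
  sInf {k | ∃ c : V → Fin k, IsRVColoring G c}

/-- The rainbow code of a vertex: its vector of distances to the color classes. -/
noncomputable def rainbowCode {V : Type*} (G : SimpleGraph V) {k : ℕ}
    (c : V → Fin k) (v : V) : Fin k → ℕ :=
  fun i => sInf {d | ∃ w, c w = i ∧ G.dist v w = d}

/-- A locating rainbow coloring: a rainbow vertex coloring whose rainbow codes
are pairwise distinct. -/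
def IsLocatingRVColoring {V : Type*} (G : SimpleGraph V) {k : ℕ} (c : V → Fin k) : Prop :=
  IsRVColoring G c ∧ Function.Injective (rainbowCode G c)

/-- The locating rainbow connection number. -/
noncomputable def rvcl {V : Type*} (G : SimpleGraph V) : ℕ :=
  sInf {k | ∃ c : V → Fin k, IsLocatingRVColoring G c}

/-- The edge corona `G ⋄ H`: one copy of `G` together with one copy of `H`
for each edge of `G`, where both endpoints of the edge are joined to
every vertex of the corresponding copy of `H`. -/
def edgeCorona {V W : Type*} (G : SimpleGraph V) (H : SimpleGraph W) :
    SimpleGraph (V ⊕ (G.edgeSet × W)) where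
  Adj x y :=
    match x, y with
    | .inl u, .inl v => G.Adj u v
    | .inl u, .inr (e, _) => u ∈ (e : Sym2 V)
    | .inr (e, _), .inl u => u ∈ (e : Sym2 V)
    | .inr (e, w), .inr (e', w') => e = e' ∧ H.Adj w w'
  symm := ⟨by
    rintro (u | ⟨e, w⟩) (v | ⟨e', w'⟩) h
    · exact h.symm
    · exact h
    · exact h
    · exact ⟨h.1.symm, h.2.symm⟩⟩
  loopless := ⟨by
    rintro (u | ⟨e, w⟩) h
    · exact G.irrefl h
    · exact H.irrefl h.2⟩

/-- A cut vertex: a vertex whose removal disconnects the graph. -/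
def IsCutVertex {V : Type*} (G : SimpleGraph V) (v : V) : Prop :=
  ¬ (G.induce {u | u ≠ v}).Connected

/-!
A rainbow vertex colouring of the tree `T` extends to `T ⋄ H` by giving all vertices of the
copies of `H` one arbitrary colour. Indeed, any two vertices of `T ⋄ H` are joined by a path
whose internal vertices are exactly the internal vertices of some path of `T`, and in an acyclic
graph every path is rainbow for a rainbow vertex colouring, being the only path between its ends.
Conversely, a rainbow vertex colouring of `T ⋄ H` restricts to one of `T`: an internal vertex of
the path of `T` from `u` to `v` separates `u` from `v` in `T ⋄ H` too, so it is an internal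
vertex of every path from `u` to `v` in `T ⋄ H`. Hence `T` and `T ⋄ H` admit rainbow vertex
colourings with exactly the same numbers of colours.
-/

namespace SimpleGraph

variable {V : Type*} {G : SimpleGraph V} {u v x : V}

theorem Walk.IsPath.start_notMem_support_dropUntil [DecidableEq V] {p : G.Walk u v}
    (hp : p.IsPath) (hx : x ∈ p.support) (hxu : x ≠ u) : u ∉ (p.dropUntil x hx).support := by
  intro hu
  have hsuffix := p.support_dropUntil_suffix_support hx
  have hnodup := hp.support_nodup
  rw [← p.cons_tail_support] at hsuffix hnodup
  rcases List.suffix_cons_iff.1 hsuffix with h | h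
  · rw [← (p.dropUntil x hx).cons_tail_support] at h
    exact hxu (List.cons.inj h).1
  · exact (List.nodup_cons.1 hnodup).1 (h.subset hu)

theorem Walk.mem_support_tail_dropLast {p : G.Walk u v} (hx : x ∈ p.support) (hxu : x ≠ u)
    (hxv : x ≠ v) : x ∈ p.support.tail.dropLast := by
  cases p with
  | nil => exact absurd (by simpa using hx) hxu
  | cons _ q =>
    rw [support_cons, List.tail_cons]
    rw [support_cons, List.mem_cons, or_iff_right hxu, ← q.dropLast_support_concat] at hx
    exact (List.mem_append.1 hx).resolve_right (by simpa using hxv)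

theorem Walk.IsPath.ne_of_mem_support_tail_dropLast {p : G.Walk u v} (hp : p.IsPath)
    (hx : x ∈ p.support.tail.dropLast) : x ≠ u ∧ x ≠ v := by
  have hnodup := hp.support_nodup
  constructor
  · rintro rfl
    rw [← p.cons_tail_support] at hnodup
    exact (List.nodup_cons.1 hnodup).1 (List.dropLast_subset _ hx)
  · rintro rfl
    rw [← p.dropLast_support_concat] at hnodup
    rw [← List.tail_dropLast] at hx
    exact List.disjoint_of_nodup_append hnodup (List.tail_subset _ hx) (List.mem_singleton_self _)

theorem exists_isPath_cons_of_mem_edgeSet {e : Sym2 V} (he : e ∈ G.edgeSet) (hu : u ∈ e)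
    {q : G.Walk u v} (hq : q.IsPath) :
    ∃ (z a : V) (h : G.Adj z a), z ∈ e ∧ a ∈ e ∧
      ∃ r : G.Walk a v, (Walk.cons h r).IsPath ∧ r.support ⊆ q.support := by
  classical
  have hadj : G.Adj u (Sym2.Mem.other hu) := by rwa [← mem_edgeSet, Sym2.other_spec]
  by_cases hy : Sym2.Mem.other hu ∈ q.support
  · exact ⟨u, _, hadj, hu, Sym2.other_mem hu, q.dropUntil _ hy,
      (Walk.cons_isPath_iff _ _).2
        ⟨hq.dropUntil hy, hq.start_notMem_support_dropUntil hy hadj.ne'⟩,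
      q.support_dropUntil_subset_support hy⟩
  · exact ⟨_, u, hadj.symm, Sym2.other_mem hu, hu, q,
      (Walk.cons_isPath_iff _ _).2 ⟨hq, hy⟩, List.Subset.refl _⟩

theorem IsAcyclic.isRainbowPath {k : ℕ} {c : V → Fin k} (hG : G.IsAcyclic)
    (hc : IsRVColoring G c) {p : G.Walk u v} (hp : p.IsPath) : IsRainbowPath G c p := by
  obtain ⟨q, hq⟩ := hc u v
  obtain rfl : p = q :=
    congrArg Subtype.val ((hG.subsingleton_path u v).elim ⟨p, hp⟩ ⟨q, hq.1⟩)
  exact hq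

end SimpleGraph

section Rainbow

variable {V V' : Type*} {G : SimpleGraph V} {G' : SimpleGraph V'} {k : ℕ} {c : V → Fin k}
  {u v : V}

theorem IsRainbowPath.reverse {p : G.Walk u v} (h : IsRainbowPath G c p) :
    IsRainbowPath G c p.reverse := by
  refine ⟨h.1.reverse, ?_⟩
  rw [Walk.support_reverse, List.tail_reverse, List.dropLast_reverse, List.tail_dropLast,
    List.map_reverse, List.nodup_reverse]
  exact h.2

theorem IsRainbowPath.of_internal_eq_map {c' : V' → Fin k} (f : V → V')
    (hf : ∀ x, c' (f x) = c x) {p : G.Walk u v} (h : IsRainbowPath G c p) {u' v' : V'}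
    {p' : G'.Walk u' v'} (hp' : p'.IsPath)
    (hint : p'.support.tail.dropLast = p.support.tail.dropLast.map f) :
    IsRainbowPath G' c' p' := by
  refine ⟨hp', ?_⟩
  rw [hint, List.map_map]
  simpa only [Function.comp_def, hf] using h.2

end Rainbow

namespace edgeCorona

variable {V W : Type*} {G : SimpleGraph V} {H : SimpleGraph W}

@[simp]
theorem adj_inl_inl {u v : V} : (edgeCorona G H).Adj (.inl u) (.inl v) ↔ G.Adj u v := Iff.rfl

@[simp]
theorem adj_inl_inr {u : V} {e : G.edgeSet} {w : W} :
    (edgeCorona G H).Adj (.inl u) (.inr (e, w)) ↔ u ∈ (e : Sym2 V) := Iff.rfl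

@[simp]
theorem adj_inr_inl {u : V} {e : G.edgeSet} {w : W} :
    (edgeCorona G H).Adj (.inr (e, w)) (.inl u) ↔ u ∈ (e : Sym2 V) := Iff.rfl

variable (G H) in
abbrev inlHom : G →g edgeCorona G H := ⟨Sum.inl, id⟩

@[simp]
theorem coe_inlHom : ⇑(inlHom G H) = Sum.inl := rfl

/-- The part of `G` that a vertex of `G ⋄ H` lies over: a vertex `v` of `G`, encoded as `s(v, v)`,
or the edge `e` carrying the copy of `H` the vertex belongs to. -/
def base : V ⊕ (G.edgeSet × W) → Sym2 V
  | .inl v => s(v, v)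
  | .inr (e, _) => e

@[simp] theorem base_inl (v : V) : base (W := W) (G := G) (.inl v) = s(v, v) := rfl

theorem adj_of_mem_base {s : V ⊕ (G.edgeSet × W)} {a b : V} (ha : a ∈ base s)
    (hb : b ∈ base s) (hab : a ≠ b) : G.Adj a b := by
  rcases s with v | ⟨e, w⟩
  · simp_all
  · exact G.adj_iff_exists_edge.2 ⟨hab, e, e.2, ha, hb⟩

theorem adj_of_adj_of_mem_base {s t : V ⊕ (G.edgeSet × W)} (hst : (edgeCorona G H).Adj s t)
    {a b : V} (ha : a ∈ base s) (hb : b ∈ base t) (hab : a ≠ b) : G.Adj a b := by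
  rcases s with u | ⟨e, w⟩ <;> rcases t with v | ⟨e', w'⟩
  · simp_all
  · obtain rfl : a = u := by simpa using ha
    exact G.adj_iff_exists_edge.2 ⟨hab, e', e'.2, hst, hb⟩
  · obtain rfl : b = v := by simpa using hb
    exact G.adj_iff_exists_edge.2 ⟨hab, e, e.2, ha, hst⟩
  · obtain rfl := hst.1
    exact adj_of_mem_base ha hb hab

theorem exists_mem_base_ne {x : V} {s : V ⊕ (G.edgeSet × W)} (hs : s ≠ .inl x) :
    ∃ a ∈ base s, a ≠ x := by
  rcases s with v | ⟨⟨⟨y, z⟩, hyz⟩, w⟩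
  · exact ⟨v, by simp, fun h => hs (h ▸ rfl)⟩
  · by_cases hy : y = x
    · exact ⟨z, Sym2.mem_mk_right y z, hy ▸ (G.ne_of_adj hyz).symm⟩
    · exact ⟨y, Sym2.mem_mk_left y z, hy⟩

theorem exists_walk_notMem_support {x : V} {s t : V ⊕ (G.edgeSet × W)}
    (p : (edgeCorona G H).Walk s t) (hp : .inl x ∉ p.support) {a b : V} (ha : a ∈ base s)
    (hax : a ≠ x) (hb : b ∈ base t) (hbx : b ≠ x) : ∃ q : G.Walk a b, x ∉ q.support := by
  induction p generalizing a with
  | nil =>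
    obtain rfl | hab := eq_or_ne a b
    · exact ⟨.nil, by simpa using hax.symm⟩
    · exact ⟨.cons (adj_of_mem_base ha hb hab) .nil, by simp [hax.symm, hbx.symm]⟩
  | cons h p ih =>
    rw [Walk.support_cons, List.mem_cons, not_or] at hp
    obtain ⟨a', ha', ha'x⟩ := exists_mem_base_ne fun h' => hp.2 (h' ▸ p.start_mem_support)
    obtain ⟨q, hq⟩ := ih hp.2 ha' ha'x hb
    obtain rfl | haa' := eq_or_ne a a'
    · exact ⟨q, hq⟩
    · exact ⟨.cons (adj_of_adj_of_mem_base h ha ha' haa') q, by simp [hax.symm, hq]⟩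

end edgeCorona

section Corona

open edgeCorona

variable {V W : Type*} {T : SimpleGraph V} {H : SimpleGraph W} {k : ℕ}

theorem IsRVColoring.comp_inl (hT : T.IsTree) {c : V ⊕ (T.edgeSet × W) → Fin k}
    (hc : IsRVColoring (edgeCorona T H) c) : IsRVColoring T (c ∘ Sum.inl) := by
  classical
  intro u v
  obtain ⟨q⟩ := hT.connected.preconnected u v
  have hq := q.bypass_isPath
  refine ⟨q.bypass, hq, ?_⟩
  obtain ⟨p, hp⟩ := hc (.inl u) (.inl v)
  have hsub : ∀ x ∈ q.bypass.support.tail.dropLast, .inl x ∈ p.support.tail.dropLast := by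
    intro x hx
    obtain ⟨hxu, hxv⟩ := hq.ne_of_mem_support_tail_dropLast hx
    refine Walk.mem_support_tail_dropLast ?_ (by simpa using hxu) (by simpa using hxv)
    by_contra hpx
    obtain ⟨r, hr⟩ := exists_walk_notMem_support p hpx (by simp) hxu.symm (by simp) hxv.symm
    have hrq : r.bypass = q.bypass := congrArg Subtype.val
      ((hT.isAcyclic.subsingleton_path u v).elim ⟨_, r.bypass_isPath⟩ ⟨_, hq⟩)
    exact hr (r.support_bypass_subset_support
      (hrq ▸ List.tail_subset _ (List.dropLast_subset _ hx)))
  have hnodup : (q.bypass.support.tail.dropLast).Nodup :=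
    ((List.dropLast_sublist _).trans (List.tail_sublist _)).nodup hq.support_nodup
  exact hnodup.map_on fun x hx y hy hxy =>
    Sum.inl_injective (List.inj_on_of_nodup_map hp.2 (hsub x hx) (hsub y hy) hxy)

variable {c : V → Fin k}

theorem IsRVColoring.exists_isRainbowPath_inl_inl (hc : IsRVColoring T c) (i : Fin k)
    (u v : V) :
    ∃ p : (edgeCorona T H).Walk (.inl u) (.inl v),
      IsRainbowPath (edgeCorona T H) (Sum.elim c fun _ => i) p := by
  obtain ⟨q, hq⟩ := hc u v
  exact ⟨q.map (inlHom T H), hq.of_internal_eq_map Sum.inl (fun _ => rfl)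
    (hq.1.map Sum.inl_injective)
    (by simp [Walk.support_map, List.map_tail, List.map_dropLast])⟩

theorem IsRVColoring.exists_isRainbowPath_inr_inl (hT : T.IsAcyclic) (hc : IsRVColoring T c)
    (i : Fin k) (e : T.edgeSet) (w : W) (v : V) :
    ∃ p : (edgeCorona T H).Walk (.inr (e, w)) (.inl v),
      IsRainbowPath (edgeCorona T H) (Sum.elim c fun _ => i) p := by
  obtain ⟨q, hq⟩ := hc (e : Sym2 V).out.1 v
  obtain ⟨z, a, hza, -, ha, r, hr, -⟩ :=
    exists_isPath_cons_of_mem_edgeSet e.2 (Sym2.out_fst_mem _) hq.1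
  have hp : (Walk.cons (adj_inr_inl (w := w) |>.2 ha) (r.map (inlHom T H))).IsPath :=
    (Walk.cons_isPath_iff _ _).2 ⟨hr.of_cons.map Sum.inl_injective, by simp⟩
  exact ⟨_, (hT.isRainbowPath hc hr).of_internal_eq_map Sum.inl (fun _ => rfl) hp
    (by simp [Walk.support_map, List.map_dropLast])⟩

theorem IsRVColoring.exists_isRainbowPath_inr_inr (hT : T.IsAcyclic) (hc : IsRVColoring T c)
    (i : Fin k) (e e' : T.edgeSet) (w w' : W) :
    ∃ p : (edgeCorona T H).Walk (.inr (e, w)) (.inr (e', w')),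
      IsRainbowPath (edgeCorona T H) (Sum.elim c fun _ => i) p := by
  by_cases heq : (e, w) = (e', w')
  · rw [heq]
    exact ⟨.nil, .nil, by simp⟩
  by_cases hshare : ∃ m, m ∈ (e : Sym2 V) ∧ m ∈ (e' : Sym2 V)
  · obtain ⟨m, hm, hm'⟩ := hshare
    refine ⟨.cons (adj_inr_inl (w := w) |>.2 hm) (.cons (adj_inl_inr (w := w') |>.2 hm') .nil),
      .mk' ?_, by simp⟩
    simpa using heq
  push Not at hshare
  -- trim a path of `T` from `e'` to `e` at both ends so that `z a ⋯ b z'` is a path of `T`;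
  -- its internal vertices are those of the path `(e, w) a ⋯ b (e', w')` of `T ⋄ H`
  obtain ⟨q, hq⟩ := hc (e' : Sym2 V).out.1 (e : Sym2 V).out.1
  obtain ⟨z', b, hz'b, hz', hb, r, hr, -⟩ :=
    exists_isPath_cons_of_mem_edgeSet e'.2 (Sym2.out_fst_mem _) hq.1
  rw [Walk.cons_isPath_iff] at hr
  obtain ⟨z, a, hza, hz, ha, r', hr', hr'r⟩ :=
    exists_isPath_cons_of_mem_edgeSet e.2 (Sym2.out_fst_mem _) hr.1.reverse
  rw [Walk.cons_isPath_iff] at hr'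
  rw [Walk.support_reverse] at hr'r
  have hP : (Walk.cons hza (r'.concat hz'b.symm)).IsPath := by
    refine (Walk.cons_isPath_iff _ _).2 ⟨hr'.1.concat (fun h => hr.2 ?_) _, ?_⟩
    · simpa using hr'r h
    · simpa [Walk.support_concat, hr'.2] using fun (h : z = z') => hshare z hz (h ▸ hz')
  have hp : (Walk.cons (adj_inr_inl (w := w) |>.2 ha)
      ((r'.map (inlHom T H)).concat (adj_inl_inr (w := w') |>.2 hb))).IsPath := by
    refine .mk' ?_
    simpa [Walk.support_concat, Walk.support_map, List.nodup_append,
      hr'.1.support_nodup.map Sum.inl_injective] using heq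
  exact ⟨_, (hT.isRainbowPath hc hP).of_internal_eq_map Sum.inl (fun _ => rfl) hp
    (by simp [Walk.support_concat, Walk.support_map])⟩

theorem IsRVColoring.sumElim (hT : T.IsAcyclic) (hc : IsRVColoring T c) (i : Fin k) :
    IsRVColoring (edgeCorona T H) (Sum.elim c fun _ => i) := by
  rintro (u | ⟨e, w⟩) (v | ⟨e', w'⟩)
  · exact hc.exists_isRainbowPath_inl_inl i u v
  · obtain ⟨p, hp⟩ := hc.exists_isRainbowPath_inr_inl hT i e' w' u
    exact ⟨p.reverse, hp.reverse⟩
  · exact hc.exists_isRainbowPath_inr_inl hT i e w v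
  · exact hc.exists_isRainbowPath_inr_inr hT i e e' w w'

end Corona

theorem stmt8_general {V W : Type*} (T : SimpleGraph V) (H : SimpleGraph W)
    (hT : T.IsTree) :
    rvc (edgeCorona T H) = rvc T := by
  obtain ⟨v₀⟩ := hT.connected.nonempty
  refine congrArg sInf (Set.ext fun k => ⟨?_, ?_⟩)
  · rintro ⟨c, hc⟩
    exact ⟨_, hc.comp_inl hT⟩
  · rintro ⟨c, hc⟩
    exact ⟨_, hc.sumElim hT.isAcyclic (c v₀)⟩

theorem stmt8 {V W : Type*} [Fintype V] [Fintype W] (T : SimpleGraph V) (H : SimpleGraph W)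
    (hT : T.IsTree) (hH : H.Connected)
    (hm : 2 ≤ Fintype.card V) (hn : 2 ≤ Fintype.card W) :
    rvc (edgeCorona T H) = rvc T :=
  stmt8_general T H hT
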